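/- arXiv:2308.10502 — 4 statements merged into one kernel-verified Lean document; each statement's English description precedes it below -/
import Mathlib

section
/- Fix i ∈ [d²]. The partial derivative of L_exp(x) with respect to the coordinate x_i equals Σ_{j1=1}^{n} ( ⟨c(x)_{j1}, f(x)_{j1} ∘ 𝖠_{[j1],i}⟩ − ⟨c(x)_{j1}, f(x)_{j1}⟩ · ⟨f(x)_{j1}, 𝖠_{[j1],i}⟩ ). -/
open Matrix Kronecker

noncomputable section

/-- The `i`-th column of the block `𝖠_{[j1]} ∈ ℝ^{n × d²}` of `𝖠 = A1 ⊗ A2`: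
`(𝖠_{[j1],i})_{i2} = 𝖠_{(j1,i2), i}`. -/
def Acol {n d : ℕ} (A1 A2 : Matrix (Fin n) (Fin d) ℝ) (j1 : Fin n)
    (i : Fin d × Fin d) : Fin n → ℝ :=
  fun i2 => (A1 ⊗ₖ A2) (j1, i2) i

/-- `u(x)_{j1} = exp(𝖠_{[j1]} x) ∈ ℝⁿ` (entrywise `exp`), for `𝖠 = A1 ⊗ A2`. -/
def uvec {n d : ℕ} (A1 A2 : Matrix (Fin n) (Fin d) ℝ) (j1 : Fin n)
    (x : Fin d × Fin d → ℝ) : Fin n → ℝ :=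
  fun i2 => Real.exp (∑ q : Fin d × Fin d, (A1 ⊗ₖ A2) (j1, i2) q * x q)

/-- `α(x)_{j1} = ⟨exp(𝖠_{[j1]} x), 1_n⟩`. -/
def alphaval {n d : ℕ} (A1 A2 : Matrix (Fin n) (Fin d) ℝ) (j1 : Fin n)
    (x : Fin d × Fin d → ℝ) : ℝ :=
  ∑ i2 : Fin n, uvec A1 A2 j1 x i2

/-- `f(x)_{j1} = α(x)_{j1}⁻¹ · u(x)_{j1} ∈ ℝⁿ`. -/
def fvec {n d : ℕ} (A1 A2 : Matrix (Fin n) (Fin d) ℝ) (j1 : Fin n)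
    (x : Fin d × Fin d → ℝ) : Fin n → ℝ :=
  fun i2 => (alphaval A1 A2 j1 x)⁻¹ * uvec A1 A2 j1 x i2

/-- `c(x)_{j1} = f(x)_{j1} − b_{[j1]} ∈ ℝⁿ`, where `b ∈ ℝ^{n²}` has blocks
`(b_{[j1]})_{i2} = b (j1, i2)`. -/
def cvec {n d : ℕ} (A1 A2 : Matrix (Fin n) (Fin d) ℝ) (b : Fin n × Fin n → ℝ)
    (j1 : Fin n) (x : Fin d × Fin d → ℝ) : Fin n → ℝ :=
  fun i2 => fvec A1 A2 j1 x i2 - b (j1, i2)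

/-- `L_exp(x) = ∑_{j1} 0.5 ‖c(x)_{j1}‖₂²`. -/
def Lexp {n d : ℕ} (A1 A2 : Matrix (Fin n) (Fin d) ℝ) (b : Fin n × Fin n → ℝ)
    (x : Fin d × Fin d → ℝ) : ℝ :=
  ∑ j1 : Fin n, 0.5 * ∑ i2 : Fin n, (cvec A1 A2 b j1 x i2) ^ 2

/-! Each block `f(x)_{j1}` is the softmax of `𝖠_{[j1]} x` (`Ablock` below). The softmax has
Jacobian `diag f - f fᵀ`, so the chain rule through `½‖f - b‖²` gives `⟨c, f ∘ a⟩ - ⟨c, f⟩ ⟨f, a⟩`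
for the direction `a = 𝖠_{[j1]} e_i = 𝖠_{[j1],i}`. -/

open Real

section Softmax

variable {ι : Type*} [Fintype ι]

def softmax (z : ι → ℝ) : ι → ℝ :=
  fun k => (∑ m, exp (z m))⁻¹ * exp (z k)

def softmaxLoss (β z : ι → ℝ) : ℝ :=
  0.5 * ∑ k, (softmax z k - β k) ^ 2

theorem sum_mul_mul_sub_sum_mul {R : Type*} [CommRing R] (c f a : ι → R) :
    ∑ k, c k * f k * (a k - ∑ m, f m * a m)
      = ∑ k, c k * (f k * a k) - (∑ k, c k * f k) * ∑ k, f k * a k := by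
  simp only [mul_sub, Finset.sum_sub_distrib, Finset.sum_mul, mul_assoc]

variable {E : Type*} [NormedAddCommGroup E] [NormedSpace ℝ E] {x : E}

theorem hasFDerivAt_softmax {z : E → ι → ℝ} {z' : ι → E →L[ℝ] ℝ}
    (hz : ∀ k, HasFDerivAt (fun y => z y k) (z' k) x) (k : ι) :
    HasFDerivAt (fun y => softmax (z y) k)
      (softmax (z x) k • (z' k - ∑ m, softmax (z x) m • z' m)) x := by
  have hexp m : HasFDerivAt (fun y => exp (z y m)) (exp (z x m) • z' m) x := (hz m).exp
  have hS_pos : 0 < ∑ m, exp (z x m) :=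
    Finset.sum_pos (fun m _ => exp_pos _) ⟨k, Finset.mem_univ k⟩
  have hinv := (hasDerivAt_inv hS_pos.ne').comp_hasFDerivAt x
    (HasFDerivAt.fun_sum fun m _ => hexp m)
  refine (hinv.mul (hexp k)).congr_fderiv ?_
  ext v
  simp only [softmax, Function.comp_apply, _root_.add_apply, _root_.smul_apply, _root_.sub_apply,
    _root_.sum_apply, smul_eq_mul, mul_assoc, ← Finset.mul_sum]
  field_simp
  ring

theorem hasFDerivAt_half_sum_sq_sub {g : E → ι → ℝ} {g' : ι → E →L[ℝ] ℝ}
    (hg : ∀ k, HasFDerivAt (fun y => g y k) (g' k) x) (β : ι → ℝ) :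
    HasFDerivAt (fun y => 0.5 * ∑ k, (g y k - β k) ^ 2) (∑ k, (g x k - β k) • g' k) x := by
  have hsq k : HasFDerivAt (fun y => (g y k - β k) ^ 2) ((2 * (g x k - β k)) • g' k) x := by
    simpa using ((hg k).sub_const (β k)).pow 2
  refine (HasFDerivAt.fun_sum fun k _ => hsq k).const_mul 0.5 |>.congr_fderiv ?_
  ext v
  simp only [_root_.smul_apply, _root_.sum_apply, smul_eq_mul, Finset.mul_sum]
  exact Finset.sum_congr rfl fun k _ => by ring

theorem hasFDerivAt_softmaxLoss {z : E → ι → ℝ} {z' : ι → E →L[ℝ] ℝ}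
    (hz : ∀ k, HasFDerivAt (fun y => z y k) (z' k) x) (β : ι → ℝ) :
    HasFDerivAt (fun y => softmaxLoss β (z y))
      (∑ k, ((softmax (z x) k - β k) * softmax (z x) k) •
        (z' k - ∑ m, softmax (z x) m • z' m)) x := by
  simpa only [softmaxLoss, mul_smul] using hasFDerivAt_half_sum_sq_sub (hasFDerivAt_softmax hz) β

end Softmax

theorem hasFDerivAt_mulVec_apply {ι κ : Type*} [Fintype κ] (N : Matrix ι κ ℝ) (k : ι)
    (x : κ → ℝ) :
    HasFDerivAt (fun y => (N *ᵥ y) k)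
      ((ContinuousLinearMap.proj k).comp (LinearMap.toContinuousLinearMap N.mulVecLin)) x :=
  ((ContinuousLinearMap.proj k).comp (LinearMap.toContinuousLinearMap N.mulVecLin)).hasFDerivAt

def Ablock {n d : ℕ} (A1 A2 : Matrix (Fin n) (Fin d) ℝ) (j1 : Fin n) :
    Matrix (Fin n) (Fin d × Fin d) ℝ :=
  Matrix.of fun i2 q => (A1 ⊗ₖ A2) (j1, i2) q

theorem Lexp_eq_sum_softmaxLoss {n d : ℕ} (A1 A2 : Matrix (Fin n) (Fin d) ℝ)
    (b : Fin n × Fin n → ℝ) (x : Fin d × Fin d → ℝ) :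
    Lexp A1 A2 b x = ∑ j1, softmaxLoss (fun i2 => b (j1, i2)) (Ablock A1 A2 j1 *ᵥ x) :=
  rfl

theorem fvec_eq_softmax {n d : ℕ} (A1 A2 : Matrix (Fin n) (Fin d) ℝ) (j1 : Fin n)
    (x : Fin d × Fin d → ℝ) : fvec A1 A2 j1 x = softmax (Ablock A1 A2 j1 *ᵥ x) :=
  rfl

theorem Acol_eq_mulVec_single {n d : ℕ} (A1 A2 : Matrix (Fin n) (Fin d) ℝ) (j1 : Fin n)
    (i : Fin d × Fin d) : Acol A1 A2 j1 i = Ablock A1 A2 j1 *ᵥ Pi.single i 1 := by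
  rw [mulVec_single_one]
  rfl

/-- For fixed `i ∈ [d²]`,
`∂ L_exp(x) / ∂ x_i
  = ∑_{j1=1}^n ( ⟨c(x)_{j1}, f(x)_{j1} ∘ 𝖠_{[j1],i}⟩
      − ⟨c(x)_{j1}, f(x)_{j1}⟩ · ⟨f(x)_{j1}, 𝖠_{[j1],i}⟩ )`. -/
theorem deriv_Lexp (n d : ℕ) (A1 A2 : Matrix (Fin n) (Fin d) ℝ)
    (b : Fin n × Fin n → ℝ) (i : Fin d × Fin d) (x : Fin d × Fin d → ℝ) :
    fderiv ℝ (fun y : Fin d × Fin d → ℝ => Lexp A1 A2 b y) x (Pi.single i 1)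
      = ∑ j1 : Fin n,
          ((∑ i2 : Fin n, cvec A1 A2 b j1 x i2
              * (fvec A1 A2 j1 x i2 * Acol A1 A2 j1 i i2))
            - (∑ i2 : Fin n, cvec A1 A2 b j1 x i2 * fvec A1 A2 j1 x i2)
              * ∑ i2 : Fin n, fvec A1 A2 j1 x i2 * Acol A1 A2 j1 i i2) := by
  simp only [Lexp_eq_sum_softmaxLoss]
  rw [(HasFDerivAt.fun_sum fun j1 _ => hasFDerivAt_softmaxLoss
    (hasFDerivAt_mulVec_apply (Ablock A1 A2 j1) · x) (fun i2 => b (j1, i2))).fderiv]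
  simp only [_root_.sum_apply, _root_.smul_apply, _root_.sub_apply, smul_eq_mul]
  refine Finset.sum_congr rfl fun j1 _ => ?_
  simp only [cvec, fvec_eq_softmax, Acol_eq_mulVec_single, ContinuousLinearMap.comp_apply,
    ContinuousLinearMap.proj_apply, LinearMap.coe_toContinuousLinearMap', Matrix.mulVecLin_apply]
  exact sum_mul_mul_sub_sum_mul _ _ _
end
end

section
/- Fix j1 ∈ [n] and i, l ∈ [d²]. The mixed second-order partial derivative ∂²(α(x)_{j1}^{−1})/∂x_i∂x_l equals 2α(x)_{j1}^{−1}·⟨f(x)_{j1}, 𝖠_{[j1],l}⟩·⟨f(x)_{j1}, 𝖠_{[j1],i}⟩ − α(x)_{j1}^{−1}·⟨f(x)_{j1}, 𝖠_{[j1],i} ∘ 𝖠_{[j1],l}⟩. -/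
/-! Write `α = ∑ₖ exp (Lₖ x)`, where `Lₖ` are the rows of `𝖠_{[j1]}`. The chain rule gives
`∂ᵢ α⁻¹ = -α⁻² ∂ᵢ α`, and differentiating once more,
`∂ₗ ∂ᵢ α⁻¹ = 2 α⁻³ ∂ᵢ α ∂ₗ α - α⁻² ∂ₗ ∂ᵢ α`, with `∂ᵢ α = ⟨u, 𝖠_{[j1],i}⟩` and
`∂ₗ ∂ᵢ α = ⟨u, 𝖠_{[j1],i} ∘ 𝖠_{[j1],l}⟩`. Since `f = α⁻¹ u`, each `⟨u, ·⟩` is `α ⟨f, ·⟩`. -/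

open Matrix Kronecker

noncomputable section

section
variable {E : Type*} [NormedAddCommGroup E] [NormedSpace ℝ E]

theorem fderiv_fderiv_inv_apply {α : E → ℝ} {α' : E → E →L[ℝ] ℝ} {β : E →L[ℝ] ℝ}
    {v : E} (hα : ∀ y, HasFDerivAt α (α' y) y) (hα₀ : ∀ y, α y ≠ 0) (x w : E)
    (hβ : HasFDerivAt (fun y => α' y v) β x) :
    fderiv ℝ (fun y => fderiv ℝ (fun z => (α z)⁻¹) y v) x w
      = 2 * (α x)⁻¹ ^ 3 * α' x v * α' x w - (α x)⁻¹ ^ 2 * β w := by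
  have hinv : ∀ y, HasFDerivAt (fun z => (α z)⁻¹) ((-(α y ^ 2)⁻¹) • α' y) y := fun y =>
    (hasDerivAt_inv (hα₀ y)).comp_hasFDerivAt y (hα y)
  have hfirst : (fun y => fderiv ℝ (fun z => (α z)⁻¹) y v)
      = fun y => -(α y)⁻¹ ^ 2 * α' y v := by
    funext y
    simp [(hinv y).fderiv, inv_pow]
  rw [hfirst, ((((hinv x).pow 2).fun_neg).fun_mul hβ).fderiv]
  have hαx := hα₀ x
  simp only [_root_.add_apply, _root_.smul_apply, _root_.neg_apply, smul_eq_mul, nsmul_eq_mul,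
    Nat.add_one_sub_one, pow_one, inv_pow]
  field_simp
  ring

variable {ι : Type*} [Fintype ι]

theorem hasFDerivAt_sum_exp (L : ι → E →L[ℝ] ℝ) (x : E) :
    HasFDerivAt (fun y => ∑ k, Real.exp (L k y)) (∑ k, Real.exp (L k x) • L k) x :=
  HasFDerivAt.fun_sum fun k _ => (L k).hasFDerivAt.exp

theorem hasFDerivAt_sum_exp_mul (L : ι → E →L[ℝ] ℝ) (c : ι → ℝ) (x : E) :
    HasFDerivAt (fun y => ∑ k, Real.exp (L k y) * c k)
      (∑ k, (Real.exp (L k x) * c k) • L k) x :=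
  (HasFDerivAt.fun_sum fun k _ => (L k).hasFDerivAt.exp.mul_const (c k)).congr_fderiv <| by
    simp only [smul_smul, mul_comm]

theorem fderiv_fderiv_inv_sum_exp [Nonempty ι] (L : ι → E →L[ℝ] ℝ) (x v w : E) :
    fderiv ℝ (fun y => fderiv ℝ (fun z => (∑ k, Real.exp (L k z))⁻¹) y v) x w
      = 2 * (∑ k, Real.exp (L k x))⁻¹ ^ 3 * (∑ k, Real.exp (L k x) * L k v)
          * (∑ k, Real.exp (L k x) * L k w)
        - (∑ k, Real.exp (L k x))⁻¹ ^ 2 * ∑ k, Real.exp (L k x) * (L k v * L k w) := by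
  have hZ₀ (y : E) : ∑ k, Real.exp (L k y) ≠ 0 :=
    (Finset.sum_pos (fun k _ => Real.exp_pos _) Finset.univ_nonempty).ne'
  have hβ : HasFDerivAt (fun y => (∑ k, Real.exp (L k y) • L k) v)
      (∑ k, (Real.exp (L k x) * L k v) • L k) x := by
    simpa only [_root_.sum_apply, _root_.smul_apply, smul_eq_mul]
      using hasFDerivAt_sum_exp_mul L (fun k => L k v) x
  rw [fderiv_fderiv_inv_apply (hasFDerivAt_sum_exp L) hZ₀ x w hβ]
  simp only [_root_.sum_apply, _root_.smul_apply, smul_eq_mul, mul_assoc]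

end

section
variable {κ ι : Type*} [Fintype ι]

def Matrix.rowCLM (M : Matrix κ ι ℝ) (k : κ) : (ι → ℝ) →L[ℝ] ℝ :=
  ∑ q, M k q • ContinuousLinearMap.proj q

theorem Matrix.rowCLM_apply (M : Matrix κ ι ℝ) (k : κ) (y : ι → ℝ) :
    M.rowCLM k y = (M *ᵥ y) k := by
  simp [rowCLM, mulVec, dotProduct]

theorem Matrix.rowCLM_single [DecidableEq ι] (M : Matrix κ ι ℝ) (k : κ) (i : ι) :
    M.rowCLM k (Pi.single i 1) = M k i := by
  simp [rowCLM_apply]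

end

theorem uvec_eq_exp_rowCLM {n d : ℕ} (A1 A2 : Matrix (Fin n) (Fin d) ℝ) (j1 : Fin n)
    (x : Fin d × Fin d → ℝ) (i2 : Fin n) :
    uvec A1 A2 j1 x i2 = Real.exp ((A1 ⊗ₖ A2).rowCLM (j1, i2) x) := by
  rw [rowCLM_apply]
  rfl

/-- For fixed `j1 ∈ [n]` and `i, l ∈ [d²]`,
`∂² (α(x)_{j1}⁻¹) / ∂x_i ∂x_l
  = 2 α(x)_{j1}⁻¹ ⟨f(x)_{j1}, 𝖠_{[j1],l}⟩ ⟨f(x)_{j1}, 𝖠_{[j1],i}⟩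
    − α(x)_{j1}⁻¹ ⟨f(x)_{j1}, 𝖠_{[j1],i} ∘ 𝖠_{[j1],l}⟩`. -/
theorem second_deriv_alphaval_inv (n d : ℕ) (A1 A2 : Matrix (Fin n) (Fin d) ℝ)
    (j1 : Fin n) (i l : Fin d × Fin d) (x : Fin d × Fin d → ℝ) :
    fderiv ℝ (fun y : Fin d × Fin d → ℝ =>
        fderiv ℝ (fun z : Fin d × Fin d → ℝ => (alphaval A1 A2 j1 z)⁻¹) y
          (Pi.single i 1))
      x (Pi.single l 1)
      = 2 * (alphaval A1 A2 j1 x)⁻¹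
            * (∑ i2 : Fin n, fvec A1 A2 j1 x i2 * Acol A1 A2 j1 l i2)
            * (∑ i2 : Fin n, fvec A1 A2 j1 x i2 * Acol A1 A2 j1 i i2)
        - (alphaval A1 A2 j1 x)⁻¹
            * ∑ i2 : Fin n, fvec A1 A2 j1 x i2
                * (Acol A1 A2 j1 i i2 * Acol A1 A2 j1 l i2) := by
  have : Nonempty (Fin n) := ⟨j1⟩
  simp only [fvec, alphaval, uvec_eq_exp_rowCLM]
  rw [fderiv_fderiv_inv_sum_exp]
  simp only [rowCLM_single, Acol, mul_assoc, ← Finset.mul_sum]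
  ring
end
end

section
/- Let f : ℝ^d → ℝ be differentiable, μ-strongly convex and L-smooth with global minimizer x* ∈ ℝ^d, and let 0 < η ≤ 1/(4L). Then for every u ∈ ℝ^d, ‖u − η∇f(u) − x*‖₂² ≤ (1 − μη)‖u − x*‖₂² − η·(f(u) − f(x*)). -/
/-!
Strong convexity at `(u, x*)` bounds `-2η⟪∇f u, u - x*⟫` by `-μη‖u - x*‖² - 2η (f u - f x*)`,
and the remaining term `η²‖∇f u‖²` of the expanded square is absorbed by `η (f u - f x*)`:
a gradient step of length `2η` decreases `f` by at least `η‖∇f u‖²` because `4Lη ≤ 1`.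
The descent inequality behind this needs no calculus: `f y - f x ≤ ⟪∇f y, y - x⟫` by convexity,
and replacing `∇f y` by `∇f x` costs at most `L‖y - x‖²`.
-/

open scoped RealInnerProductSpace

section SubgradientLipschitz

variable {E : Type*} [NormedAddCommGroup E] [InnerProductSpace ℝ E]
  {f : E → ℝ} {g : E → E} {L : ℝ}

theorem le_add_inner_add_mul_norm_sq_of_subgradient
    (hsub : ∀ x y, f x + ⟪g x, y - x⟫ ≤ f y) (hlip : ∀ x y, ‖g x - g y‖ ≤ L * ‖x - y‖)
    (x y : E) : f y ≤ f x + ⟪g x, y - x⟫ + L * ‖y - x‖ ^ 2 := by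
  have hyx : f y - f x ≤ ⟪g y, y - x⟫ := by
    have := hsub y x
    rw [← neg_sub y x, inner_neg_right] at this
    linarith
  have hcost : ⟪g y - g x, y - x⟫ ≤ L * ‖y - x‖ ^ 2 :=
    calc ⟪g y - g x, y - x⟫ ≤ ‖g y - g x‖ * ‖y - x‖ := real_inner_le_norm _ _
      _ ≤ L * ‖y - x‖ * ‖y - x‖ := by gcongr; exact hlip y x
      _ = L * ‖y - x‖ ^ 2 := by ring
  rw [inner_sub_left] at hcost
  linarith

theorem mul_norm_sq_le_sub_of_forall_le {η : ℝ} (hη : 0 ≤ η) (hηL : 4 * L * η ≤ 1)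
    (hsub : ∀ x y, f x + ⟪g x, y - x⟫ ≤ f y) (hlip : ∀ x y, ‖g x - g y‖ ≤ L * ‖x - y‖)
    {xstar : E} (hmin : ∀ y, f xstar ≤ f y) (u : E) :
    η * ‖g u‖ ^ 2 ≤ f u - f xstar := by
  have hstep := le_add_inner_add_mul_norm_sq_of_subgradient hsub hlip u (u - (2 * η) • g u)
  rw [sub_sub_cancel_left, inner_neg_right, norm_neg, real_inner_smul_right,
    real_inner_self_eq_norm_sq, norm_smul, Real.norm_of_nonneg (by positivity)] at hstep
  nlinarith [hmin (u - (2 * η) • g u), mul_nonneg hη (sq_nonneg ‖g u‖)]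

end SubgradientLipschitz

theorem gradient_step_contraction_general (d : ℕ) (L μ η : ℝ) (hμ : 0 ≤ μ)
    (hη : 0 < η) (hηL : η ≤ 1 / (4 * L))
    (f : EuclideanSpace ℝ (Fin d) → ℝ)
    (hsmooth : ∀ x y : EuclideanSpace ℝ (Fin d),
      ‖gradient f x - gradient f y‖ ≤ L * ‖x - y‖)
    (hconv : ∀ x y : EuclideanSpace ℝ (Fin d),
      f x + ⟪gradient f x, y - x⟫ + μ / 2 * ‖y - x‖ ^ 2 ≤ f y)
    (xstar : EuclideanSpace ℝ (Fin d))
    (hmin : ∀ y, f xstar ≤ f y)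
    (u : EuclideanSpace ℝ (Fin d)) :
    ‖u - η • gradient f u - xstar‖ ^ 2
      ≤ (1 - μ * η) * ‖u - xstar‖ ^ 2 - η * (f u - f xstar) := by
  have hLη : 4 * L * η ≤ 1 := by
    rcases le_or_gt L 0 with hL | hL
    · nlinarith
    · rwa [le_div_iff₀ (by positivity), mul_comm] at hηL
  have hsub : ∀ x y, f x + ⟪gradient f x, y - x⟫ ≤ f y := fun x y =>
    (le_add_of_nonneg_right (by positivity)).trans (hconv x y)
  have hgrad := mul_norm_sq_le_sub_of_forall_le hη.le hLη hsub hsmooth hmin u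
  have hstrong := hconv u xstar
  rw [← neg_sub u xstar, inner_neg_right, norm_neg] at hstrong
  have hexpand : ‖u - η • gradient f u - xstar‖ ^ 2 = ‖u - xstar‖ ^ 2
      - 2 * η * ⟪gradient f u, u - xstar⟫ + η ^ 2 * ‖gradient f u‖ ^ 2 := by
    rw [sub_right_comm, norm_sub_sq_real, real_inner_smul_right, real_inner_comm, norm_smul,
      Real.norm_of_nonneg hη.le]
    ring
  rw [hexpand]
  nlinarith [mul_le_mul_of_nonneg_left hgrad hη.le]

/-- If `f : ℝ^d → ℝ` is differentiable, `μ`-strongly convex (`μ ≥ 0`)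
and `L`-smooth with global minimizer `x*`, and `0 < η ≤ 1/(4L)`, then for every `u`,
`‖u − η∇f(u) − x*‖² ≤ (1 − μη)‖u − x*‖² − η (f(u) − f(x*))`. -/
theorem gradient_step_contraction (d : ℕ) (L μ η : ℝ) (hμ : 0 ≤ μ)
    (hη : 0 < η) (hηL : η ≤ 1 / (4 * L))
    (f : EuclideanSpace ℝ (Fin d) → ℝ)
    (hdiff : Differentiable ℝ f)
    (hsmooth : ∀ x y : EuclideanSpace ℝ (Fin d),
      ‖gradient f x - gradient f y‖ ≤ L * ‖x - y‖)
    (hconv : ∀ x y : EuclideanSpace ℝ (Fin d),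
      f x + ⟪gradient f x, y - x⟫ + μ / 2 * ‖y - x‖ ^ 2 ≤ f y)
    (xstar : EuclideanSpace ℝ (Fin d))
    (hmin : ∀ y, f xstar ≤ f y)
    (u : EuclideanSpace ℝ (Fin d)) :
    ‖u - η • gradient f u - xstar‖ ^ 2
      ≤ (1 - μ * η) * ‖u - xstar‖ ^ 2 - η * (f u - f xstar) :=
  gradient_step_contraction_general d L μ η hμ hη hηL f hsmooth hconv xstar hmin u
end

section
/- Let R be a random b×d real matrix whose entries are independent Gaussian random variables with mean 0 and variance 1/b. Then for every fixed g ∈ ℝ^d, E[‖RᵀR g‖₂²] ≤ (1 + 3d/b)·‖g‖₂². -/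
/-
Coordinatewise, `RᵀR g` is a quadratic form in the entries of `R`, so `E‖RᵀR g‖²` is a linear
combination of fourth moments `E[X_a X_b X_c X_e]` of the entries. For independent centred entries
of variance `σ²` and fourth moment `m₄` these are
`σ⁴ (δ_ab δ_ce + δ_ac δ_be + δ_ae δ_bc) + (m₄ - 3σ⁴) δ_abce`, and for Gaussian entries the
correction vanishes (Isserlis), since Gaussian integration by parts gives
`E[X^(n+2)] = (n+1) σ² E[X^n]`, hence `m₄ = 3σ⁴`. Summing the Kronecker deltas gives
`E‖RᵀR g‖² = σ⁴ b (b + d + 1) ‖g‖² = (1 + (d + 1)/b) ‖g‖²`, and `d + 1 ≤ 3d` once `d ≥ 1`.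
-/

open Matrix MeasureTheory ProbabilityTheory Finset
open scoped NNReal ENNReal

lemma Matrix.transpose_mul_mulVec_apply {α m n : Type*} [CommSemiring α] [Fintype m] [Fintype n]
    (A : Matrix m n α) (g : n → α) (j : n) :
    ((Aᵀ * A) *ᵥ g) j = ∑ p : m × n, A p.1 j * A p.1 p.2 * g p.2 := by
  simp only [mulVec, dotProduct, mul_apply, transpose_apply, sum_mul, Fintype.sum_prod_type]
  exact sum_comm

namespace MeasureTheory

variable {Ω : Type*} [MeasurableSpace Ω] {μ : Measure Ω}

lemma integral_sq_finsetSum {ι : Type*} (s : Finset ι) {Z : ι → Ω → ℝ}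
    (hZ : ∀ i ∈ s, MemLp (Z i) 2 μ) :
    ∫ ω, (∑ i ∈ s, Z i ω) ^ 2 ∂μ = ∑ i ∈ s, ∑ j ∈ s, ∫ ω, Z i ω * Z j ω ∂μ := by
  simp only [sq, sum_mul_sum]
  have hint (i) (hi : i ∈ s) (j) (hj : j ∈ s) : Integrable (fun ω => Z i ω * Z j ω) μ :=
    (hZ i hi).integrable_mul (hZ j hj)
  rw [integral_finsetSum _ fun i hi => integrable_finsetSum _ fun j hj => hint i hi j hj]
  exact sum_congr rfl fun i hi => integral_finsetSum _ fun j hj => hint i hi j hj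

end MeasureTheory

namespace ProbabilityTheory

lemma hasDerivAt_gaussianPDFReal (μ : ℝ) (v : ℝ≥0) (x : ℝ) :
    HasDerivAt (gaussianPDFReal μ v) (-((x - μ) / v) * gaussianPDFReal μ v x) x := by
  have hexponent : HasDerivAt (fun y => -(y - μ) ^ 2 / (2 * (v : ℝ))) (-((x - μ) / v)) x := by
    refine ((((hasDerivAt_id' x).sub_const μ).fun_pow 2).fun_neg.div_const _).congr_deriv ?_
    norm_num
    ring
  rw [gaussianPDFReal_def]
  exact (hexponent.exp.const_mul _).congr_deriv (by ring)

lemma integrable_pow_mul_gaussianPDFReal (v : ℝ≥0) (n : ℕ) :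
    Integrable (fun x => gaussianPDFReal 0 v x * x ^ n) := by
  by_cases hv : v = 0
  · simp [hv, gaussianPDFReal_zero_var]
  have h := (memLp_id_gaussianReal (μ := 0) (v := v) n).integrable_norm_pow'
  rw [gaussianReal_of_var_ne_zero 0 hv, integrable_withDensity_iff_integrable_smul'
    (measurable_gaussianPDF 0 v) (ae_of_all _ fun _ => ENNReal.ofReal_lt_top)] at h
  rw [← integrable_norm_iff (by fun_prop)]
  refine h.congr (ae_of_all _ fun x => ?_)
  simp [toReal_gaussianPDF, abs_of_nonneg (gaussianPDFReal_nonneg 0 v x)]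

theorem integral_pow_add_two_gaussianReal (v : ℝ≥0) (n : ℕ) :
    ∫ x, x ^ (n + 2) ∂gaussianReal 0 v = (n + 1) * v * ∫ x, x ^ n ∂gaussianReal 0 v := by
  by_cases hv : v = 0
  · simp [hv]
  have hderiv (x : ℝ) : HasDerivAt (fun x => x ^ (n + 1) * gaussianPDFReal 0 v x)
      ((n + 1) * (gaussianPDFReal 0 v x * x ^ n)
        - (v : ℝ)⁻¹ * (gaussianPDFReal 0 v x * x ^ (n + 2))) x := by
    refine ((hasDerivAt_pow (n + 1) x).mul (hasDerivAt_gaussianPDFReal 0 v x)).congr_deriv ?_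
    push_cast
    ring
  have hzero := integral_eq_zero_of_hasDerivAt_of_integrable hderiv
    (((integrable_pow_mul_gaussianPDFReal v n).const_mul _).sub
      ((integrable_pow_mul_gaussianPDFReal v (n + 2)).const_mul _))
    (by simpa only [mul_comm] using integrable_pow_mul_gaussianPDFReal v (n + 1))
  rw [integral_sub ((integrable_pow_mul_gaussianPDFReal v n).const_mul _)
    ((integrable_pow_mul_gaussianPDFReal v (n + 2)).const_mul _), integral_const_mul,
    integral_const_mul, sub_eq_zero] at hzero
  simp only [integral_gaussianReal_eq_integral_smul hv, smul_eq_mul]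
  have hv' : (v : ℝ) ≠ 0 := by exact_mod_cast hv
  field_simp at hzero
  rw [← hzero]
  ring

lemma integral_sq_gaussianReal (v : ℝ≥0) : ∫ x, x ^ 2 ∂gaussianReal 0 v = v := by
  simpa using integral_pow_add_two_gaussianReal v 0

lemma integral_pow_four_gaussianReal (v : ℝ≥0) :
    ∫ x, x ^ 4 ∂gaussianReal 0 v = 3 * (v : ℝ) ^ 2 := by
  rw [integral_pow_add_two_gaussianReal v 2, integral_sq_gaussianReal]
  push_cast
  ring

section Moments

variable {ι Ω : Type*} [MeasurableSpace Ω] {μ : Measure Ω} {X : ι → Ω → ℝ}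

lemma iIndepFun.integral_mul_mul_mul_eq_zero (hX : iIndepFun X μ)
    (hmeas : ∀ i, AEMeasurable (X i) μ) {a b c e : ι} (hmean : ∫ ω, X a ω ∂μ = 0)
    (hab : a ≠ b) (hac : a ≠ c) (hae : a ≠ e) :
    ∫ ω, X a ω * (X b ω * X c ω * X e ω) ∂μ = 0 := by
  classical
  have hindep : IndepFun (X a) (fun ω => X b ω * X c ω * X e ω) μ := by
    have hφ : Measurable fun x : ({a} : Finset ι) → ℝ => x ⟨a, by simp⟩ := by fun_prop
    have hψ : Measurable fun x : ({b, c, e} : Finset ι) → ℝ =>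
        x ⟨b, by simp⟩ * x ⟨c, by simp⟩ * x ⟨e, by simp⟩ := by fun_prop
    exact (hX.indepFun_finset₀ {a} {b, c, e} (by simp [hab, hac, hae]) hmeas).comp hφ hψ
  rw [hindep.integral_fun_mul_eq_mul_integral (hmeas a).aestronglyMeasurable
    (by fun_prop), hmean, zero_mul]

lemma iIndepFun.integral_mul_self_mul_mul_self (hX : iIndepFun X μ)
    (hmeas : ∀ i, AEMeasurable (X i) μ) {σ2 : ℝ} (hsq : ∀ i, ∫ ω, X i ω ^ 2 ∂μ = σ2)
    {a c : ι} (hac : a ≠ c) :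
    ∫ ω, X a ω * X a ω * (X c ω * X c ω) ∂μ = σ2 ^ 2 := by
  have hindep : IndepFun (fun ω => X a ω ^ 2) (fun ω => X c ω ^ 2) μ :=
    (hX.indepFun hac).comp (measurable_id.pow_const 2) (measurable_id.pow_const 2)
  simp only [← sq]
  rw [hindep.integral_fun_mul_eq_mul_integral (by fun_prop) (by fun_prop), hsq, hsq, sq]

lemma iIndepFun.integral_mul_mul_mul_eq_zero_of_unique (hX : iIndepFun X μ)
    (hmeas : ∀ i, AEMeasurable (X i) μ) (hmean : ∀ i, ∫ ω, X i ω ∂μ = 0) {a b c e : ι}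
    (h : (a ≠ b ∧ a ≠ c ∧ a ≠ e) ∨ (b ≠ a ∧ b ≠ c ∧ b ≠ e) ∨ (c ≠ a ∧ c ≠ b ∧ c ≠ e) ∨
      (e ≠ a ∧ e ≠ b ∧ e ≠ c)) :
    ∫ ω, X a ω * X b ω * X c ω * X e ω ∂μ = 0 := by
  rcases h with ⟨h₁, h₂, h₃⟩ | ⟨h₁, h₂, h₃⟩ | ⟨h₁, h₂, h₃⟩ | ⟨h₁, h₂, h₃⟩
  · simpa only [mul_assoc] using hX.integral_mul_mul_mul_eq_zero hmeas (hmean a) h₁ h₂ h₃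
  · rw [← hX.integral_mul_mul_mul_eq_zero hmeas (hmean b) h₁ h₂ h₃]
    congr 1; ext; ring
  · rw [← hX.integral_mul_mul_mul_eq_zero hmeas (hmean c) h₁ h₂ h₃]
    congr 1; ext; ring
  · rw [← hX.integral_mul_mul_mul_eq_zero hmeas (hmean e) h₁ h₂ h₃]
    congr 1; ext; ring

lemma iIndepFun.integral_mul_mul_mul (hX : iIndepFun X μ) (hmeas : ∀ i, AEMeasurable (X i) μ)
    {σ2 m4 : ℝ} (hmean : ∀ i, ∫ ω, X i ω ∂μ = 0) (hsq : ∀ i, ∫ ω, X i ω ^ 2 ∂μ = σ2)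
    (hfour : ∀ i, ∫ ω, X i ω ^ 4 ∂μ = m4) [DecidableEq ι] (a b c e : ι) :
    ∫ ω, X a ω * X b ω * X c ω * X e ω ∂μ =
      σ2 ^ 2 * ((if a = b ∧ c = e then 1 else 0) + (if a = c ∧ b = e then 1 else 0)
        + (if a = e ∧ b = c then 1 else 0))
      + (m4 - 3 * σ2 ^ 2) * (if a = b ∧ a = c ∧ a = e then 1 else 0) := by
  by_cases hu : (a ≠ b ∧ a ≠ c ∧ a ≠ e) ∨ (b ≠ a ∧ b ≠ c ∧ b ≠ e) ∨ (c ≠ a ∧ c ≠ b ∧ c ≠ e) ∨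
      (e ≠ a ∧ e ≠ b ∧ e ≠ c)
  · rw [hX.integral_mul_mul_mul_eq_zero_of_unique hmeas hmean hu]
    split_ifs <;> grind
  by_cases hab : a = b
  · obtain rfl : c = e := by grind
    subst hab
    by_cases hac : a = c
    · subst hac
      rw [show ∫ ω, X a ω * X a ω * X a ω * X a ω ∂μ = ∫ ω, X a ω ^ 4 ∂μ by
        congr 1; ext; ring, hfour]
      simp only [and_self, if_true]
      ring
    · rw [← hX.integral_mul_self_mul_mul_self hmeas hsq hac]
      simp [hac, mul_assoc]
  · by_cases hac : a = c
    · obtain rfl : b = e := by grind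
      subst hac
      rw [show ∫ ω, X a ω * X b ω * X a ω * X b ω ∂μ = ∫ ω, X a ω * X a ω * (X b ω * X b ω) ∂μ by
        congr 1; ext; ring, hX.integral_mul_self_mul_mul_self hmeas hsq hab]
      simp [hab]
    · obtain rfl : a = e := by grind
      obtain rfl : b = c := by grind
      rw [show ∫ ω, X a ω * X b ω * X b ω * X a ω ∂μ = ∫ ω, X a ω * X a ω * (X b ω * X b ω) ∂μ by
        congr 1; ext; ring, hX.integral_mul_self_mul_mul_self hmeas hsq hab]
      simp [hab]

end Moments

section

variable {Ω m n : Type*} [MeasurableSpace Ω] {μ : Measure Ω} [Fintype m] [Fintype n]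
  [DecidableEq m] [DecidableEq n]

theorem integral_sum_sq_transpose_mul_mulVec (R : Ω → Matrix m n ℝ)
    (hindep : iIndepFun (fun (p : m × n) ω => R ω p.1 p.2) μ)
    (hL4 : ∀ i j, MemLp (fun ω => R ω i j) 4 μ) {σ2 m4 : ℝ}
    (hmean : ∀ i j, ∫ ω, R ω i j ∂μ = 0) (hsq : ∀ i j, ∫ ω, R ω i j ^ 2 ∂μ = σ2)
    (hfour : ∀ i j, ∫ ω, R ω i j ^ 4 ∂μ = m4) (g : n → ℝ) :
    ∫ ω, ∑ j, (((R ω)ᵀ * R ω) *ᵥ g) j ^ 2 ∂μ =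
      (Fintype.card m * (Fintype.card m + Fintype.card n + 1) * σ2 ^ 2
        + Fintype.card m * (m4 - 3 * σ2 ^ 2)) * ∑ j, g j ^ 2 := by
  have : ENNReal.HolderTriple 4 4 2 := ⟨by
    rw [← two_mul, show (4 : ℝ≥0∞) = 2 * 2 by norm_num, ENNReal.mul_inv (by simp) (by simp),
      ← mul_assoc, ENNReal.mul_inv_cancel (by simp) (by simp), one_mul]⟩
  have hL2 (j : n) (p : m × n) : MemLp (fun ω => R ω p.1 j * R ω p.1 p.2 * g p.2) 2 μ :=
    ((hL4 _ _).mul' (hL4 _ _)).mul_const _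
  have hterm (j : n) (p q : m × n) :
      ∫ ω, R ω p.1 j * R ω p.1 p.2 * g p.2 * (R ω q.1 j * R ω q.1 q.2 * g q.2) ∂μ =
        g p.2 * g q.2 * ∫ ω, R ω p.1 j * R ω p.1 p.2 * R ω q.1 j * R ω q.1 q.2 ∂μ := by
    rw [← integral_const_mul]
    congr 1; ext; ring
  simp only [transpose_mul_mulVec_apply]
  rw [integral_finsetSum _ fun j _ => (memLp_finsetSum _ fun p _ => hL2 j p).integrable_sq]
  simp only [integral_sq_finsetSum _ fun p _ => hL2 _ p, hterm]
  have hmeas (p : m × n) : AEMeasurable (fun ω => R ω p.1 p.2) μ := (hL4 p.1 p.2).aemeasurable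
  have hfourth (j : n) (p q : m × n) := hindep.integral_mul_mul_mul hmeas (fun p => hmean p.1 p.2)
    (fun p => hsq p.1 p.2) (fun p => hfour p.1 p.2) (p.1, j) p (q.1, j) q
  -- reduce `(p.1, j).1` to `p.1`, so that `hfourth` matches the integrands syntactically
  dsimp only at hfourth
  simp only [hfourth, Fintype.sum_prod_type, Prod.mk.injEq, true_and, mul_add, sum_add_distrib]
  simp only [ite_and, mul_ite, mul_one, mul_zero, sum_ite_irrel, sum_ite_eq, mem_univ, ↓reduceIte,
    sum_const_zero, sum_const, card_univ, nsmul_eq_mul, and_true, and_self_left, mul_sum, eq_comm]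
  simp only [← sum_add_distrib]
  exact sum_congr rfl fun _ _ => by ring

end

end ProbabilityTheory

/-- Let `R` be a random `b × d` real matrix whose entries are
independent Gaussian random variables with mean `0` and variance `1/b`. Then for
every fixed `g ∈ ℝ^d`, `E[‖RᵀR g‖₂²] ≤ (1 + 3d/b) ‖g‖₂²`. -/
theorem expectation_sq_norm_gaussian_sketch (b d : ℕ) (hb : 0 < b)
    {Ω : Type*} [MeasureSpace Ω] [IsProbabilityMeasure (ℙ : Measure Ω)]
    (R : Ω → Matrix (Fin b) (Fin d) ℝ)
    (hmeas : ∀ (i : Fin b) (j : Fin d), Measurable fun ω => R ω i j)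
    (hindep : iIndepFun
      (fun (p : Fin b × Fin d) (ω : Ω) => R ω p.1 p.2) ℙ)
    (hdist : ∀ (i : Fin b) (j : Fin d),
      Measure.map (fun ω => R ω i j) ℙ = gaussianReal 0 ((b : NNReal))⁻¹)
    (g : Fin d → ℝ) :
    (∫ ω, ∑ j : Fin d, (((R ω)ᵀ * R ω).mulVec g j) ^ 2 ∂ℙ)
      ≤ (1 + 3 * d / b) * ∑ j : Fin d, (g j) ^ 2 := by
  have hmoment (i : Fin b) (j : Fin d) (k : ℕ) :
      ∫ ω, R ω i j ^ k ∂ℙ = ∫ x, x ^ k ∂gaussianReal 0 (b : ℝ≥0)⁻¹ := by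
    rw [← hdist i j, integral_map (hmeas i j).aemeasurable (by fun_prop)]
  have hL4 (i : Fin b) (j : Fin d) : MemLp (fun ω => R ω i j) 4 ℙ :=
    (memLp_id_gaussianReal 4).comp_measurePreserving ⟨hmeas i j, hdist i j⟩
  rw [integral_sum_sq_transpose_mul_mulVec R hindep hL4
    (fun i j => by simpa using hmoment i j 1) (fun i j => hmoment i j 2) (fun i j => hmoment i j 4),
    integral_sq_gaussianReal, integral_pow_four_gaussianReal]
  obtain rfl | hd := Nat.eq_zero_or_pos d
  · simp
  have hb' : (0 : ℝ) < b := by exact_mod_cast hb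
  have hd' : (1 : ℝ) ≤ d := by exact_mod_cast hd
  refine mul_le_mul_of_nonneg_right ?_ (sum_nonneg fun j _ => sq_nonneg (g j))
  simp only [Fintype.card_fin, NNReal.coe_inv, NNReal.coe_natCast, sub_self, mul_zero, add_zero]
  calc (b : ℝ) * (b + d + 1) * (b : ℝ)⁻¹ ^ 2 = 1 + (d + 1) / b := by field_simp; ring
    _ ≤ 1 + 3 * d / b := by gcongr; linarith
end
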